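/- arXiv:2602.15708 — 6 statements merged into one kernel-verified Lean document; each statement's English description precedes it below -/
import Mathlib

section
/- For any nonempty domain D ⊆ L(C) over m ≥ 2 candidates, 0 ≤ ansd(D) ≤ 1/2, and ansd(D) = 0 if and only if D = L(C). -/
/-- Rankings over `m` candidates are permutations of `Fin m` (candidate ↦ position,
smaller position = ranked higher). `swapDist u v` counts pairs of candidates
on whose relative order `u` and `v` disagree. -/
def swapDist {m : ℕ} (u v : Equiv.Perm (Fin m)) : ℕ :=
  ((Finset.univ : Finset (Fin m × Fin m)).filter
    (fun p => u p.1 < u p.2 ∧ v p.2 < v p.1)).card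

/-- The reverse of a ranking. -/
def revRank {m : ℕ} (v : Equiv.Perm (Fin m)) : Equiv.Perm (Fin m) :=
  v.trans Fin.revPerm

/-- Swap distance from a domain `D` to a ranking `u`. -/
noncomputable def domDist {m : ℕ} (D : Finset (Equiv.Perm (Fin m))) (u : Equiv.Perm (Fin m)) : ℕ :=
  sInf ((fun w => swapDist w u) '' (D : Set (Equiv.Perm (Fin m))))

/-- Average normalized swap distance of a domain. -/
noncomputable def ansd {m : ℕ} (D : Finset (Equiv.Perm (Fin m))) : ℚ :=
  ((∑ u : Equiv.Perm (Fin m), (domDist D u : ℚ)) / (Nat.factorial m)) / (m.choose 2)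

/-- Outer diversity of a domain. -/
noncomputable def outDiv {m : ℕ} (D : Finset (Equiv.Perm (Fin m))) : ℚ :=
  1 - 2 * ansd D

/-!
Reversing a ranking `u` flips the relative order of every pair of candidates, so any fixed
`w` disagrees with `u` and with its reverse on complementary sets of pairs:
`swap(w, u) + swap(w, rev u) = C(m, 2)`. Taking `w` in `D` and pairing each `u` with `rev u`
bounds the sum of `swap(D, u)` over all rankings by half of `m! · C(m, 2)`. The average
vanishes exactly when every `swap(D, u)` does, i.e. when every ranking lies in `D`.
-/

open Equiv Finset

variable {m : ℕ}

lemma card_filter_apply_lt_apply (w : Perm (Fin m)) :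
    #{p : Fin m × Fin m | w p.1 < w p.2} = m.choose 2 := by
  calc #{p : Fin m × Fin m | w p.1 < w p.2} = #{p : Fin m × Fin m | p.1 < p.2} :=
        card_equiv (w.prodCongr w) (by simp)
    _ = m.choose 2 := by simpa using Fintype.card_product_filter_lt (α := Fin m)

lemma swapDist_self (u : Perm (Fin m)) : swapDist u u = 0 := by
  simp only [swapDist, card_eq_zero, filter_eq_empty_iff]
  rintro p - ⟨h₁, h₂⟩
  exact lt_asymm h₁ h₂

lemma swapDist_eq_zero_iff {w u : Perm (Fin m)} : swapDist w u = 0 ↔ w = u := by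
  refine ⟨fun h => ?_, fun h => h ▸ swapDist_self u⟩
  simp only [swapDist, card_eq_zero, filter_eq_empty_iff, mem_univ, true_implies, not_and,
    not_lt, Prod.forall] at h
  have hmono : StrictMono (u ∘ w.symm) := by
    intro a b hab
    obtain ⟨x, rfl⟩ := w.surjective a
    obtain ⟨y, rfl⟩ := w.surjective b
    have hxy : x ≠ y := by rintro rfl; exact hab.false
    simpa using (h x y (by simpa using hab)).lt_of_ne (u.injective.ne hxy)
  ext x
  simpa using congrArg Fin.val (hmono.apply_eq (x := w x)).symm

lemma revRank_involutive : Function.Involutive (revRank : Perm (Fin m) → Perm (Fin m)) :=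
  fun u => Equiv.ext fun x => by simp [revRank]

lemma swapDist_add_swapDist_revRank (w u : Perm (Fin m)) :
    swapDist w u + swapDist w (revRank u) = m.choose 2 := by
  rw [← card_filter_apply_lt_apply w, swapDist, swapDist, ← filter_filter, ← filter_filter,
    ← card_filter_add_card_filter_not (s := {p : Fin m × Fin m | w p.1 < w p.2})
      (fun p => u p.2 < u p.1)]
  congr 2
  refine filter_congr fun p hp => ?_
  have hne : p.1 ≠ p.2 := fun he => by simp [he] at hp
  simp only [revRank, Equiv.trans_apply, Fin.revPerm_apply, Fin.rev_lt_rev, not_lt]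
  exact ⟨le_of_lt, fun hle => hle.lt_of_ne (u.injective.ne hne)⟩

section DomDist

variable {D : Finset (Perm (Fin m))}

lemma domDist_le {w : Perm (Fin m)} (hw : w ∈ D) (u : Perm (Fin m)) :
    domDist D u ≤ swapDist w u :=
  Nat.sInf_le ⟨w, hw, rfl⟩

lemma exists_mem_domDist_eq (hD : D.Nonempty) (u : Perm (Fin m)) :
    ∃ w ∈ D, swapDist w u = domDist D u :=
  Nat.sInf_mem (hD.to_set.image _)

lemma domDist_eq_zero_iff (hD : D.Nonempty) (u : Perm (Fin m)) :
    domDist D u = 0 ↔ u ∈ D := by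
  refine ⟨fun h => ?_, fun hu => Nat.eq_zero_of_le_zero (swapDist_self u ▸ domDist_le hu u)⟩
  obtain ⟨w, hw, hwu⟩ := exists_mem_domDist_eq hD u
  rwa [← swapDist_eq_zero_iff.1 (hwu.trans h)]

lemma domDist_add_domDist_revRank_le {w : Perm (Fin m)} (hw : w ∈ D)
    (u : Perm (Fin m)) : domDist D u + domDist D (revRank u) ≤ m.choose 2 :=
  swapDist_add_swapDist_revRank w u ▸ add_le_add (domDist_le hw u) (domDist_le hw _)

lemma two_mul_sum_domDist_le (hD : D.Nonempty) :
    2 * ∑ u, domDist D u ≤ m.factorial * m.choose 2 := by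
  obtain ⟨w, hw⟩ := hD
  have hrev : ∑ u, domDist D (revRank u) = ∑ u, domDist D u :=
    Equiv.sum_comp revRank_involutive.toPerm (domDist D)
  calc 2 * ∑ u, domDist D u = ∑ u, (domDist D u + domDist D (revRank u)) := by
        rw [sum_add_distrib, hrev, two_mul]
    _ ≤ ∑ _u : Perm (Fin m), m.choose 2 :=
        sum_le_sum fun u _ => domDist_add_domDist_revRank_le hw u
    _ = m.factorial * m.choose 2 := by simp [Fintype.card_perm]

lemma ansd_eq (D : Finset (Perm (Fin m))) :
    ansd D = (∑ u, domDist D u : ℕ) / (m.factorial * m.choose 2 : ℚ) := by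
  rw [ansd, div_div]
  push_cast
  rfl

end DomDist

theorem stmt3 (m : ℕ) (hm : 2 ≤ m) (D : Finset (Equiv.Perm (Fin m))) (hD : D.Nonempty) :
    0 ≤ ansd D ∧ ansd D ≤ 1 / 2 ∧ (ansd D = 0 ↔ D = Finset.univ) := by
  have hpos : (0 : ℚ) < m.factorial * m.choose 2 := by
    have := Nat.choose_pos hm
    positivity
  have hsum : (2 * ∑ u, domDist D u : ℕ) ≤ (m.factorial * m.choose 2 : ℚ) := by
    exact_mod_cast two_mul_sum_domDist_le hD
  refine ⟨by rw [ansd_eq]; positivity, ?_, ?_⟩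
  · rw [ansd_eq, div_le_iff₀ hpos]
    push_cast at hsum ⊢
    linarith
  · rw [ansd_eq, div_eq_zero_iff, or_iff_left hpos.ne', Nat.cast_eq_zero, sum_eq_zero_iff,
      eq_univ_iff_forall]
    simp only [mem_univ, true_implies, domDist_eq_zero_iff hD]
end

section
/- Let m be even and let GS/cat be the group-separable caterpillar domain over candidates c_1,…,c_m, i.e., the set of rankings v such that reading candidates along v, their indices first strictly increase up to c_m and then strictly decrease. Then ansd(GS/cat) ≤ (1/4)·(m−2)/(m−1), and consequently out-div(GS/cat) ≥ 1 − (1/2)·(m−2)/(m−1) > 1/2. -/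
/-- A ranking belongs to the caterpillar group-separable domain iff the sequence of
candidate indices read from top to bottom is first strictly increasing and then
strictly decreasing (`v.symm p` is the candidate at position `p`). -/
def unimodalPerm {m : ℕ} (v : Equiv.Perm (Fin m)) : Prop :=
  ∃ t : Fin m, (∀ p q : Fin m, p < q → q ≤ t → v.symm p < v.symm q) ∧
    (∀ p q : Fin m, t ≤ p → p < q → v.symm q < v.symm p)

/-- The caterpillar group-separable domain over `m` candidates. -/
noncomputable def gsCat (m : ℕ) : Finset (Equiv.Perm (Fin m)) :=
  @Finset.filter _ (fun v => unimodalPerm v) (Classical.decPred _) Finset.univ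

/-!
Sorting the top `m/2` positions of a ranking `u` increasingly and the bottom `m/2` decreasingly
gives a ranking of GS/cat whose swap distance to `u` is at most the number of inversions inside
the two halves. Reversing the order within each half turns exactly those pairs of a half that are
inverted into pairs that are not, so `u` and its half-reversal together have `2 * C(m/2, 2)` such
inversions. Averaging over all rankings, `ansd ≤ C(m/2, 2) / C(m, 2) = (m - 2) / (4 (m - 1))`.
-/

open Finset Equiv Nat

lemma exists_perm_lt_iff_of_injective {n : ℕ} {α : Type*} [LinearOrder α] {f : Fin n → α}
    (hf : Function.Injective f) : ∃ w : Perm (Fin n), ∀ a b, w a < w b ↔ f a < f b := by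
  have hsort : StrictMono (f ∘ Tuple.sort f) :=
    (Tuple.monotone_sort f).strictMono_of_injective (hf.comp (Tuple.sort f).injective)
  refine ⟨(Tuple.sort f).symm, fun a b => ?_⟩
  simpa using (hsort.lt_iff_lt (a := (Tuple.sort f).symm a) (b := (Tuple.sort f).symm b)).symm

lemma unimodalPerm_of_lt_iff {m : ℕ} {α : Type*} [LinearOrder α] {w : Perm (Fin m)}
    {f : Fin m → α} (hw : ∀ a b, w a < w b ↔ f a < f b) (c : Fin m)
    (hinc : ∀ a b, f a < f b → f b ≤ f c → a < b)
    (hdec : ∀ a b, f a < f b → f c ≤ f a → b < a) : unimodalPerm w := by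
  have hlt : ∀ p q, p < q ↔ f (w.symm p) < f (w.symm q) := fun p q => by
    simpa using hw (w.symm p) (w.symm q)
  have hle : ∀ p q, p ≤ q ↔ f (w.symm p) ≤ f (w.symm q) := fun p q => by
    simpa using not_congr (hlt q p)
  refine ⟨w c, fun p q hpq hqc => hinc _ _ ((hlt p q).1 hpq) ?_,
    fun p q hcp hpq => hdec _ _ ((hlt p q).1 hpq) ?_⟩
  · simpa using (hle q (w c)).1 hqc
  · simpa using (hle (w c) p).1 hcp

lemma Finset.card_product_filter_gt {α : Type*} [LinearOrder α] (s : Finset α) :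
    #{x ∈ s ×ˢ s | x.2 < x.1} = (#s).choose 2 := by
  rw [← card_product_filter_lt]
  exact card_equiv (Equiv.prodComm α α) (by simp [and_comm])

namespace GSCat

variable {m k : ℕ}

/-- Sorting candidates by this key lists those in the top `k` positions of `u` increasingly,
then the others decreasingly. -/
def halfKey (k : ℕ) (u : Perm (Fin m)) (a : Fin m) : ℕ :=
  if (u a : ℕ) < k then a else 2 * m - a

lemma halfKey_injective (k : ℕ) (u : Perm (Fin m)) : Function.Injective (halfKey k u) := by
  intro a b h
  have := a.isLt
  have := b.isLt
  unfold halfKey at h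
  ext
  split_ifs at h <;> omega

lemma unimodalPerm_of_lt_iff_halfKey (hm : 0 < m) {u w : Perm (Fin m)}
    (hw : ∀ a b, w a < w b ↔ halfKey k u a < halfKey k u b) : unimodalPerm w := by
  refine unimodalPerm_of_lt_iff hw ⟨m - 1, by omega⟩ ?_ ?_ <;>
  · intro a b h₁ h₂
    have hab : (a : ℕ) ≠ b := Fin.val_ne_of_ne ((halfKey_injective k u).ne_iff.1 h₁.ne)
    have := a.isLt
    have := b.isLt
    simp only [halfKey, Fin.lt_def] at h₁ h₂ ⊢
    split_ifs at h₁ h₂ <;> omega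

def topHalf (k : ℕ) (u : Perm (Fin m)) : Finset (Fin m) := {a | (u a : ℕ) < k}

def halfPairs (k : ℕ) (u : Perm (Fin m)) : Finset (Fin m × Fin m) :=
  {p ∈ topHalf k u ×ˢ topHalf k u | p.1 < p.2} ∪
    {p ∈ (topHalf k u)ᶜ ×ˢ (topHalf k u)ᶜ | p.2 < p.1}

def halfInversions (k : ℕ) (u : Perm (Fin m)) : Finset (Fin m × Fin m) :=
  {p ∈ halfPairs k u | u p.2 < u p.1}

lemma exists_mem_gsCat_swapDist_le (hm : 0 < m) (k : ℕ) (u : Perm (Fin m)) :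
    ∃ w ∈ gsCat m, swapDist w u ≤ #(halfInversions k u) := by
  obtain ⟨w, hw⟩ := exists_perm_lt_iff_of_injective (halfKey_injective k u)
  refine ⟨w, by simpa [gsCat] using unimodalPerm_of_lt_iff_halfKey hm hw, card_le_card ?_⟩
  intro p hp
  have := p.1.isLt
  have := p.2.isLt
  simp only [mem_filter, mem_univ, true_and, hw, halfKey, Fin.lt_def] at hp
  simp only [halfInversions, halfPairs, topHalf, mem_filter, mem_union, mem_product, mem_compl,
    mem_univ, true_and, Fin.lt_def]
  split_ifs at hp <;> omega

lemma domDist_gsCat_le (hm : 0 < m) (k : ℕ) (u : Perm (Fin m)) :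
    domDist (gsCat m) u ≤ #(halfInversions k u) := by
  obtain ⟨w, hw, hle⟩ := exists_mem_gsCat_swapDist_le hm k u
  exact (Nat.sInf_le (Set.mem_image_of_mem (fun w => swapDist w u) (mem_coe.2 hw))).trans hle

def halfReversal (k : ℕ) (hk : k ≤ m) : Perm (Fin m) :=
  Function.Involutive.toPerm
    (fun p => ⟨if (p : ℕ) < k then k - 1 - p else m + k - 1 - p, by split_ifs <;> omega⟩)
    (by intro p; ext; dsimp only; split_ifs <;> omega)

lemma halfReversal_val (hk : k ≤ m) (p : Fin m) :
    (halfReversal k hk p : ℕ) = if (p : ℕ) < k then k - 1 - p else m + k - 1 - p := rfl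

lemma halfReversal_val_lt_iff (hk : k ≤ m) (p : Fin m) :
    (halfReversal k hk p : ℕ) < k ↔ (p : ℕ) < k := by
  rw [halfReversal_val]; split_ifs <;> omega

lemma halfReversal_lt_iff (hk : k ≤ m) {p q : Fin m} (h : (p : ℕ) < k ↔ (q : ℕ) < k) :
    halfReversal k hk p < halfReversal k hk q ↔ q < p := by
  rw [Fin.lt_def, Fin.lt_def, halfReversal_val, halfReversal_val]
  split_ifs <;> omega

lemma halfPairs_trans_halfReversal (hk : k ≤ m) (u : Perm (Fin m)) :
    halfPairs k (u.trans (halfReversal k hk)) = halfPairs k u := by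
  simp only [halfPairs, topHalf, Equiv.trans_apply, halfReversal_val_lt_iff]

lemma halfInversions_trans_halfReversal (hk : k ≤ m) (u : Perm (Fin m)) :
    halfInversions k (u.trans (halfReversal k hk)) = {p ∈ halfPairs k u | ¬ u p.2 < u p.1} := by
  rw [halfInversions, halfPairs_trans_halfReversal]
  refine filter_congr fun p hp => ?_
  simp only [halfPairs, topHalf, mem_union, mem_filter, mem_product, mem_compl, mem_univ,
    true_and] at hp
  have hne : u p.1 ≠ u p.2 :=
    u.injective.ne (by rcases hp with ⟨-, h⟩ | ⟨-, h⟩; exacts [h.ne, h.ne'])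
  rw [Equiv.trans_apply, Equiv.trans_apply, halfReversal_lt_iff hk (by tauto),
    not_lt, hne.le_iff_lt]

lemma card_halfInversions_add_card_halfInversions_trans (hk : k ≤ m) (u : Perm (Fin m)) :
    #(halfInversions k u) + #(halfInversions k (u.trans (halfReversal k hk))) =
      #(halfPairs k u) := by
  rw [halfInversions_trans_halfReversal]
  exact card_filter_add_card_filter_not _

lemma card_topHalf (hk : k ≤ m) (u : Perm (Fin m)) : #(topHalf k u) = k := by
  rw [topHalf, card_equiv u (t := {p : Fin m | (p : ℕ) < k}) (by simp), Fin.card_filter_val_lt,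
    min_eq_right hk]

lemma card_halfPairs (hk : k ≤ m) (u : Perm (Fin m)) :
    #(halfPairs k u) = k.choose 2 + (m - k).choose 2 := by
  rw [halfPairs, card_union_of_disjoint, card_product_filter_lt, card_product_filter_gt, card_compl,
    Fintype.card_fin, card_topHalf hk]
  rw [disjoint_left]
  simp only [mem_filter, mem_product, mem_compl]
  tauto

lemma two_mul_sum_card_halfInversions (hk : k ≤ m) :
    2 * ∑ u : Perm (Fin m), #(halfInversions k u) = m ! * (k.choose 2 + (m - k).choose 2) := by
  have hshift : ∑ u : Perm (Fin m), #(halfInversions k (u.trans (halfReversal k hk))) =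
      ∑ u : Perm (Fin m), #(halfInversions k u) :=
    Equiv.sum_comp (Equiv.mulLeft (halfReversal k hk)) (fun u => #(halfInversions k u))
  calc 2 * ∑ u : Perm (Fin m), #(halfInversions k u)
      = ∑ u : Perm (Fin m),
          (#(halfInversions k u) + #(halfInversions k (u.trans (halfReversal k hk)))) := by
        rw [sum_add_distrib, hshift, two_mul]
    _ = m ! * (k.choose 2 + (m - k).choose 2) := by
        simp [card_halfInversions_add_card_halfInversions_trans, card_halfPairs hk,
          Fintype.card_perm]

lemma ansd_gsCat_le (hm : 0 < m) (hk : k ≤ m) :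
    ansd (gsCat m) ≤ ((k.choose 2 + (m - k).choose 2 : ℕ) : ℚ) / 2 / m.choose 2 := by
  have hsum : 2 * ∑ u, domDist (gsCat m) u ≤ m ! * (k.choose 2 + (m - k).choose 2) :=
    two_mul_sum_card_halfInversions hk ▸
      Nat.mul_le_mul_left 2 (sum_le_sum fun u _ => domDist_gsCat_le hm k u)
  unfold ansd
  gcongr ?_ / _
  rw [div_le_div_iff₀ (by positivity) (by norm_num)]
  exact_mod_cast (by linarith : (∑ u, domDist (gsCat m) u) * 2 ≤ _ * m !)

end GSCat

theorem stmt6 (m : ℕ) (hmeven : Even m) (hm : 2 ≤ m) :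
    ansd (gsCat m) ≤ (1 / 4) * (((m : ℚ) - 2) / ((m : ℚ) - 1)) ∧
    outDiv (gsCat m) ≥ 1 - (1 / 2) * (((m : ℚ) - 2) / ((m : ℚ) - 1)) ∧
    outDiv (gsCat m) > 1 / 2 := by
  obtain ⟨k, rfl⟩ := hmeven
  have hk1 : (1 : ℚ) ≤ k := by exact_mod_cast (by omega : 1 ≤ k)
  have hansd : ansd (gsCat (k + k)) ≤
      1 / 4 * ((((k + k : ℕ) : ℚ) - 2) / (((k + k : ℕ) : ℚ) - 1)) := by
    refine (GSCat.ansd_gsCat_le (by omega) (Nat.le_add_right k k)).trans_eq ?_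
    have : (2 * k - 1 : ℚ) ≠ 0 := by linarith
    rw [Nat.add_sub_cancel]
    push_cast [Nat.cast_choose_two]
    field_simp
    ring
  have hratio : (((k + k : ℕ) : ℚ) - 2) / (((k + k : ℕ) : ℚ) - 1) < 1 := by
    push_cast
    rw [div_lt_one (by linarith)]
    linarith
  unfold outDiv
  exact ⟨hansd, by linarith, by linarith⟩
end

section
/- A ranking v of candidates c_1,…,c_m is in the caterpillar group-separable domain if and only if the sequence of candidate indices read along v is unimodal (first increasing, then decreasing) with maximum m; consequently the caterpillar group-separable domain has exactly 2^{m-1} rankings. -/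
/-!
Reading the caterpillar from the root, candidate `c_i` is put either in front of or behind the
frontier of the subtree on `c_{i+1}, …, c_m`. As `c_i` is smaller than every candidate of that
subtree, this produces exactly the lists that increase up to `m` and then decrease: conversely the
minimum of such a list sits at one of its two ends. The two placements of `c_i` never give the
same list, so each of the `m - 1` internal nodes doubles the number of frontiers.
-/

/-- `IsCatFrontier i m l`: `l` is a frontier (after possibly reversing children of
some internal nodes) of the binary caterpillar GS-tree over candidates `i, i+1, …, m`,
whose leaf closest to the root is `c_i`. -/
inductive IsCatFrontier : ℕ → ℕ → List ℕ → Prop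
  | base (m : ℕ) : IsCatFrontier m m [m]
  | left {i m : ℕ} {l : List ℕ} : i < m → IsCatFrontier (i + 1) m l →
      IsCatFrontier i m (i :: l)
  | right {i m : ℕ} {l : List ℕ} : i < m → IsCatFrontier (i + 1) m l →
      IsCatFrontier i m (l ++ [i])

section Unimodal

variable {α : Type*} [Preorder α]

def UnimodalWithPeak (p : α) (l : List α) : Prop :=
  ∃ a d : List α, l = a ++ p :: d ∧ (a ++ [p]).Pairwise (· < ·) ∧ (p :: d).Pairwise (· > ·)

namespace UnimodalWithPeak

variable {p x : α} {l : List α}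

theorem singleton (p : α) : UnimodalWithPeak p [p] :=
  ⟨[], [], rfl, List.pairwise_singleton _ _, List.pairwise_singleton _ _⟩

theorem cons (h : UnimodalWithPeak p l) (hx : ∀ y ∈ l, x < y) :
    UnimodalWithPeak p (x :: l) := by
  obtain ⟨a, d, rfl, ha, hd⟩ := h
  refine ⟨x :: a, d, rfl, ?_, hd⟩
  rw [List.cons_append, List.pairwise_cons]
  refine ⟨fun y hy => hx y ?_, ha⟩
  simp only [List.mem_append, List.mem_cons] at hy ⊢
  tauto

theorem concat (h : UnimodalWithPeak p l) (hx : ∀ y ∈ l, x < y) :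
    UnimodalWithPeak p (l ++ [x]) := by
  obtain ⟨a, d, rfl, ha, hd⟩ := h
  refine ⟨a, d ++ [x], by simp, ha, ?_⟩
  rw [← List.cons_append, List.pairwise_append]
  refine ⟨hd, List.pairwise_singleton _ _, fun y hy z hz => ?_⟩
  rw [List.mem_singleton] at hz
  subst hz
  simp only [List.mem_cons] at hy
  exact hx y (by simp only [List.mem_append, List.mem_cons]; tauto)

theorem eq_cons_or_eq_concat_of_minimal (h : UnimodalWithPeak p l) (hxl : x ∈ l) (hxp : x ≠ p)
    (hmin : ∀ y ∈ l, x ≤ y) :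
    (∃ l', l = x :: l' ∧ UnimodalWithPeak p l') ∨ ∃ l', l = l' ++ [x] ∧ UnimodalWithPeak p l' := by
  obtain ⟨a, d, rfl, ha, hd⟩ := h
  rcases List.mem_append.1 hxl with hxa | hxd
  · left
    obtain _ | ⟨b, a⟩ := a
    · simp at hxa
    obtain rfl | hxa := List.mem_cons.1 hxa
    · exact ⟨a ++ p :: d, rfl, a, d, rfl, ha.of_cons, hd⟩
    · have hbx : b < x := List.rel_of_pairwise_cons ha (List.mem_append_left _ hxa)
      exact absurd hbx (hmin b (by simp)).not_gt
  · right
    have hxd : x ∈ d := (List.mem_cons.1 hxd).resolve_left hxp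
    obtain rfl | ⟨d, e, rfl⟩ := d.eq_nil_or_concat'
    · simp at hxd
    rw [← List.cons_append, List.pairwise_append] at hd
    rcases List.mem_append.1 hxd with hxd | hxe
    · have hxe : x > e := hd.2.2 x (List.mem_cons_of_mem p hxd) e (List.mem_singleton_self e)
      exact absurd hxe (hmin e (by simp)).not_gt
    · obtain rfl := List.mem_singleton.1 hxe
      exact ⟨a ++ p :: d, by simp, a, d, rfl, ha, hd.1⟩

end UnimodalWithPeak

end Unimodal

theorem List.range'_eq_cons_range'_succ {i m : ℕ} (hi : i < m) :
    List.range' i (m - i + 1) = i :: List.range' (i + 1) (m - (i + 1) + 1) := by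
  rw [show m - i + 1 = m - (i + 1) + 1 + 1 by omega, List.range'_succ]

namespace IsCatFrontier

variable {i m : ℕ} {l : List ℕ}

theorem le (h : IsCatFrontier i m l) : i ≤ m := by
  cases h <;> omega

theorem perm_range' (h : IsCatFrontier i m l) : l.Perm (List.range' i (m - i + 1)) := by
  induction h with
  | base => simp
  | left hi _ ih =>
    rw [List.range'_eq_cons_range'_succ hi]
    exact ih.cons _
  | right hi _ ih =>
    rw [List.range'_eq_cons_range'_succ hi]
    exact (List.perm_append_singleton _ _).trans (ih.cons _)

theorem mem_iff (h : IsCatFrontier i m l) {x : ℕ} : x ∈ l ↔ i ≤ x ∧ x ≤ m := by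
  rw [h.perm_range'.mem_iff, List.mem_range'_1]
  have := h.le
  omega

theorem unimodal (h : IsCatFrontier i m l) : UnimodalWithPeak m l := by
  induction h with
  | base m => exact .singleton m
  | left _ h ih => exact ih.cons fun y hy => (h.mem_iff.1 hy).1
  | right _ h ih => exact ih.concat fun y hy => (h.mem_iff.1 hy).1

theorem of_perm_of_unimodal (hi : i ≤ m) (hp : l.Perm (List.range' i (m - i + 1)))
    (hu : UnimodalWithPeak m l) : IsCatFrontier i m l := by
  induction hn : m - i generalizing i l with
  | zero =>
    obtain rfl : i = m := by omega
    rw [hn, List.range'_one, List.perm_singleton] at hp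
    exact hp ▸ .base i
  | succ n ih =>
    have hmin : ∀ y ∈ l, i ≤ y := fun y hy => (List.mem_range'_1.1 (hp.mem_iff.1 hy)).1
    have hil : i ∈ l := hp.mem_iff.2 (List.mem_range'_1.2 ⟨le_rfl, by omega⟩)
    have hlt : i < m := by omega
    rw [List.range'_eq_cons_range'_succ hlt] at hp
    rcases hu.eq_cons_or_eq_concat_of_minimal hil hlt.ne hmin with
      ⟨l', rfl, hu'⟩ | ⟨l', rfl, hu'⟩
    · exact .left hlt (ih hlt hp.cons_inv hu' (by omega))
    · have hp' := ((List.perm_append_singleton i l').symm.trans hp).cons_inv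
      exact .right hlt (ih hlt hp' hu' (by omega))

theorem eq_singleton (h : IsCatFrontier m m l) : l = [m] := by
  cases h <;> first | rfl | omega

theorem cons_ne_concat {l₁ l₂ : List ℕ} (h₁ : IsCatFrontier (i + 1) m l₁)
    (h₂ : IsCatFrontier (i + 1) m l₂) : i :: l₁ ≠ l₂ ++ [i] := by
  intro he
  rcases List.cons_eq_append_iff.1 he with ⟨-, he⟩ | ⟨l₂', rfl, -⟩
  · obtain rfl : l₁ = [] := (List.cons.inj he).2.symm
    simpa using h₁.mem_iff.2 ⟨h₁.le, le_rfl⟩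
  · have := (h₂.mem_iff.1 List.mem_cons_self).1
    omega

theorem card_eq_two_mul (hi : i < m) :
    Nat.card {l // IsCatFrontier i m l} = 2 * Nat.card {l // IsCatFrontier (i + 1) m l} := by
  let place : Bool × {l // IsCatFrontier (i + 1) m l} → {l // IsCatFrontier i m l}
    | (true, l) => ⟨i :: l, .left hi l.2⟩
    | (false, l) => ⟨l ++ [i], .right hi l.2⟩
  have hplace : Function.Bijective place := by
    constructor
    · rintro ⟨_ | _, l₁, h₁⟩ ⟨_ | _, l₂, h₂⟩ he <;> simp only [place, Subtype.mk.injEq] at he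
      · simp [List.append_cancel_right he]
      · exact absurd he.symm (cons_ne_concat h₂ h₁)
      · exact absurd he (cons_ne_concat h₁ h₂)
      · simp [(List.cons.inj he).2]
    · rintro ⟨l, hl⟩
      cases hl with
      | base => omega
      | left _ hl' => exact ⟨(true, ⟨_, hl'⟩), rfl⟩
      | right _ hl' => exact ⟨(false, ⟨_, hl'⟩), rfl⟩
  rw [← Nat.card_eq_of_bijective place hplace, Nat.card_prod, Nat.card_eq_fintype_card,
    Fintype.card_bool]

theorem card_eq_two_pow (hi : i ≤ m) : Nat.card {l // IsCatFrontier i m l} = 2 ^ (m - i) := by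
  induction hn : m - i generalizing i with
  | zero =>
    obtain rfl : i = m := by omega
    exact Nat.card_eq_one_iff_exists.2 ⟨⟨[i], .base i⟩, fun l => Subtype.ext l.2.eq_singleton⟩
  | succ n ih =>
    rw [card_eq_two_mul (by omega), ih (by omega) (by omega), pow_succ, mul_comm]

end IsCatFrontier

theorem stmt7 (m : ℕ) (hm : 1 ≤ m) :
    (∀ l : List ℕ, IsCatFrontier 1 m l ↔
      (l.Perm (List.range' 1 m) ∧
        ∃ a d : List ℕ, l = a ++ m :: d ∧
          (a ++ [m]).Pairwise (· < ·) ∧ (m :: d).Pairwise (· > ·))) ∧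
    Nat.card {l : List ℕ // IsCatFrontier 1 m l} = 2 ^ (m - 1) := by
  have hlen : m - 1 + 1 = m := Nat.sub_add_cancel hm
  refine ⟨fun l => ⟨fun h => ⟨?_, h.unimodal⟩, fun ⟨hp, hu⟩ => ?_⟩,
    IsCatFrontier.card_eq_two_pow hm⟩
  · simpa only [hlen] using h.perm_range'
  · exact IsCatFrontier.of_perm_of_unimodal hm (by rwa [hlen]) hu
end

section
/- Let D be the group-separable domain over m = 2^k candidates defined by a balanced binary tree (GS/bal). For every ranking v ∈ D, the number of rankings u ∉ D at swap distance exactly 1 from v whose nearest member of D is uniquely v is exactly 2^{k-1} − 1 = m/2 − 1; equivalently, v has m−1 adjacent-transposition neighbors, of which m/2 lie in D and m/2 − 1 lie outside D and are at distance > 1 from every other member of D. -/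
/-- Swap distance between two rankings represented as duplicate-free lists of
candidates (top candidate first): the number of pairs of candidates ordered
oppositely by the two lists. -/
def listSwapDist (u v : List ℕ) : ℕ :=
  ((u.toFinset ×ˢ u.toFinset).filter
    (fun p => u.idxOf p.1 < u.idxOf p.2 ∧ v.idxOf p.2 < v.idxOf p.1)).card

/-- `IsBal k o l` : `l` is a frontier (after possibly reversing children of some
internal nodes) of the complete balanced binary GS-tree over the `2^k` candidates
`o, o+1, …, o + 2^k - 1`. The domain GS/bal over `m = 2^k` candidates is
`{l | IsBal k 0 l}`. -/
inductive IsBal : ℕ → ℕ → List ℕ → Prop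
  | leaf (o : ℕ) : IsBal 0 o [o]
  | node {k o : ℕ} {l₁ l₂ : List ℕ} :
      IsBal k o l₁ → IsBal k (o + 2 ^ k) l₂ → IsBal (k + 1) o (l₁ ++ l₂)
  | nodeRev {k o : ℕ} {l₁ l₂ : List ℕ} :
      IsBal k o l₁ → IsBal k (o + 2 ^ k) l₂ → IsBal (k + 1) o (l₂ ++ l₁)


/-!
The rankings at swap distance one from `v` are its adjacent transpositions `swapAdj v i`,
`i < m - 1`, because a single inversion must be between neighbours. In a balanced GS-tree over
an even offset the sibling leaves are the pairs `{2t, 2t + 1}`, and every member of the domain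
holds them at positions `2j, 2j + 1`. Swapping inside such a pair (`i` even) flips a lowest node
and stays in the domain. Swapping across two pairs (`i` odd) gives a ranking at distance at least
two from every member `w ≠ v`: if `w` orders the swapped entries as `v` does, it also disagrees
with `v`, hence with the swapped ranking, on some other pair; if it reverses them, contiguity of
the pairs in `w` makes it reverse each swapped entry against the sibling of the other as well.
Taking `w` to be the swapped ranking itself shows that it lies outside the domain.
-/

open List

section SwapAdj

variable {α : Type*}

/-- Exchange the entries at positions `i` and `i + 1` (no effect if `i + 1` is out of range). -/
def swapAdj : List α → ℕ → List α
  | a :: b :: l, 0 => b :: a :: l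
  | a :: l, i + 1 => a :: swapAdj l i
  | l, _ => l

@[simp] theorem swapAdj_cons_succ (a : α) (l : List α) (i : ℕ) :
    swapAdj (a :: l) (i + 1) = a :: swapAdj l i := by
  cases l <;> rfl

theorem swapAdj_perm : ∀ (l : List α) (i : ℕ), swapAdj l i ~ l
  | a :: b :: l, 0 => Perm.swap a b l
  | a :: l, i + 1 => by simpa using (swapAdj_perm l i).cons a
  | [], _ | [_], 0 => Perm.refl _

@[simp] theorem length_swapAdj (l : List α) (i : ℕ) : (swapAdj l i).length = l.length :=
  (swapAdj_perm l i).length_eq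

theorem getElem?_swapAdj : ∀ {l : List α} {i : ℕ}, i + 1 < l.length →
    ∀ j, (swapAdj l i)[j]? = l[Equiv.swap i (i + 1) j]?
  | a :: b :: l, 0, _, j => by
    rcases j with _ | _ | j <;> simp [swapAdj, Equiv.swap_apply_of_ne_of_ne]
  | a :: l, i + 1, h, j => by
    rcases j with _ | j
    · rw [swapAdj_cons_succ, Equiv.swap_apply_of_ne_of_ne (by omega) (by omega)]
      rfl
    · rw [swapAdj_cons_succ, getElem?_cons_succ, getElem?_swapAdj (by simpa using h) j]
      have : Equiv.swap (i + 1) (i + 1 + 1) (j + 1) = Equiv.swap i (i + 1) j + 1 := by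
        simp only [Equiv.swap_apply_def]
        split_ifs <;> omega
      rw [this, getElem?_cons_succ]

theorem idxOf_swapAdj [BEq α] [LawfulBEq α] {l : List α} (hl : l.Nodup) {i : ℕ}
    (hi : i + 1 < l.length) (x : α) :
    idxOf x (swapAdj l i) = Equiv.swap i (i + 1) (idxOf x l) := by
  by_cases hx : x ∈ l
  · have hlt : Equiv.swap i (i + 1) (idxOf x l) < l.length := by
      have := idxOf_lt_length_iff.2 hx
      rw [Equiv.swap_apply_def]
      split_ifs <;> omega
    have hget : (swapAdj l i)[Equiv.swap i (i + 1) (idxOf x l)]'(by simpa using hlt) = x := by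
      rw [← Option.some_inj, ← getElem?_eq_getElem, getElem?_swapAdj hi, Equiv.swap_apply_self,
        getElem?_eq_getElem (idxOf_lt_length_iff.2 hx), getElem_idxOf]
    have := ((swapAdj_perm l i).nodup_iff.2 hl).idxOf_getElem _ (by simpa using hlt)
    rwa [hget] at this
  · rw [idxOf_eq_length hx, idxOf_eq_length (fun h => hx ((swapAdj_perm l i).subset h)),
      length_swapAdj, Equiv.swap_apply_of_ne_of_ne] <;> omega

theorem swapAdj_append_left {l₁ : List α} (l₂ : List α) {i : ℕ} (h : i + 1 < l₁.length) :
    swapAdj (l₁ ++ l₂) i = swapAdj l₁ i ++ l₂ := by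
  induction l₁ generalizing i with
  | nil => simp at h
  | cons a l ih =>
    rcases i with _ | i
    · rcases l with _ | ⟨b, l⟩
      · simp at h
      · rfl
    · simp [ih (by simpa using h)]

theorem swapAdj_append_right (l₁ l₂ : List α) (i : ℕ) :
    swapAdj (l₁ ++ l₂) (l₁.length + i) = l₁ ++ swapAdj l₂ i := by
  induction l₁ with
  | nil => simp
  | cons a l ih => simpa [Nat.succ_add] using ih

end SwapAdj

theorem List.Nodup.idxOf_eq_iff {α : Type*} [BEq α] [LawfulBEq α] {l : List α} (hl : l.Nodup)
    {x : α} {i : ℕ} (hi : i < l.length) : idxOf x l = i ↔ l[i] = x :=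
  ⟨fun e => by subst e; exact getElem_idxOf hi, fun e => e ▸ hl.idxOf_getElem i hi⟩

section Inversions

variable {u v : List ℕ}

def inversions (u v : List ℕ) : Finset (ℕ × ℕ) :=
  (u.toFinset ×ˢ u.toFinset).filter
    (fun p => u.idxOf p.1 < u.idxOf p.2 ∧ v.idxOf p.2 < v.idxOf p.1)

theorem listSwapDist_eq_card_inversions (u v : List ℕ) :
    listSwapDist u v = (inversions u v).card :=
  rfl

@[simp] theorem mem_inversions {x y : ℕ} :
    (x, y) ∈ inversions u v ↔
      (x ∈ u ∧ y ∈ u) ∧ idxOf x u < idxOf y u ∧ idxOf y v < idxOf x v := by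
  simp [inversions]

theorem listSwapDist_self (u : List ℕ) : listSwapDist u u = 0 := by
  rw [listSwapDist_eq_card_inversions, Finset.card_eq_zero, Finset.eq_empty_iff_forall_notMem]
  rintro ⟨x, y⟩
  simp only [mem_inversions]
  omega

theorem two_le_listSwapDist {p q : ℕ × ℕ} (hp : p ∈ inversions u v)
    (hq : q ∈ inversions u v) (hpq : p ≠ q) : 2 ≤ listSwapDist u v :=
  Finset.one_lt_card.2 ⟨p, hp, q, hq, hpq⟩

theorem eq_of_inversions_eq_empty (hv : v.Nodup) (huv : u ~ v)
    (h : inversions v u = ∅) : u = v := by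
  have hu := huv.nodup_iff.2 hv
  refine huv.eq_of_pairwise (le := fun x y => idxOf x v ≤ idxOf y v)
    (fun x y hx _ hxy hyx => (idxOf_inj (huv.subset hx)).1 (le_antisymm hxy hyx)) ?_ ?_
  · refine pairwise_iff_getElem.2 fun i j hi hj hij => not_lt.1 fun hlt => ?_
    have : (u[j], u[i]) ∈ inversions v u := by
      rw [mem_inversions, hu.idxOf_getElem, hu.idxOf_getElem]
      exact ⟨⟨huv.subset (getElem_mem _), huv.subset (getElem_mem _)⟩, hlt, hij⟩
    simp [h] at this
  · refine pairwise_iff_getElem.2 fun i j hi hj hij => ?_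
    simp only [hv.idxOf_getElem]
    exact hij.le

theorem inversions_swapAdj (hv : v.Nodup) {i : ℕ} (hi : i + 1 < v.length) :
    inversions v (swapAdj v i) = {(v[i], v[i + 1])} := by
  ext ⟨x, y⟩
  rw [mem_inversions, Finset.mem_singleton, Prod.mk.injEq, eq_comm (a := x), eq_comm (a := y),
    ← hv.idxOf_eq_iff, ← hv.idxOf_eq_iff, ← idxOf_lt_length_iff, ← idxOf_lt_length_iff,
    idxOf_swapAdj hv hi, idxOf_swapAdj hv hi, Equiv.swap_apply_def, Equiv.swap_apply_def]
  split_ifs <;> omega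

theorem listSwapDist_swapAdj (hv : v.Nodup) {i : ℕ} (hi : i + 1 < v.length) :
    listSwapDist v (swapAdj v i) = 1 := by
  rw [listSwapDist_eq_card_inversions, inversions_swapAdj hv hi, Finset.card_singleton]

theorem swapAdj_injOn (hv : v.Nodup) :
    Set.InjOn (swapAdj v) {i | i + 1 < v.length} := by
  intro i hi j hj hij
  have := inversions_swapAdj hv hi
  rw [hij, inversions_swapAdj hv hj, Finset.singleton_inj, Prod.mk.injEq,
    hv.getElem_inj_iff] at this
  exact this.1.symm

end Inversions

section AdjacentTranspositions

variable {u v w : List ℕ}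

theorem idxOf_eq_succ_of_inversions_eq_singleton (hv : v.Nodup) (huv : u ~ v) {a b : ℕ}
    (hab : inversions v u = {(a, b)}) : idxOf b v = idxOf a v + 1 := by
  have hinv : ∀ x y, (x, y) ∈ inversions v u ↔ x = a ∧ y = b := fun x y => by
    rw [hab, Finset.mem_singleton, Prod.mk.injEq]
  obtain ⟨⟨ha, hb⟩, hav, hbu⟩ := mem_inversions.1 ((hinv a b).2 ⟨rfl, rfl⟩)
  by_contra hne
  have hc : idxOf a v + 1 < v.length := by have := idxOf_lt_length_iff.2 hb; omega
  -- the entry `c` just after `a` sits strictly between `a` and `b` in `v`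
  set c := v[idxOf a v + 1]
  have hcv : idxOf c v = idxOf a v + 1 := hv.idxOf_getElem _ hc
  have hca : c ≠ a := fun h => by rw [h] at hcv; omega
  have hcb : c ≠ b := fun h => by rw [h] at hcv; omega
  have hac : ¬ idxOf c u < idxOf a u := fun h =>
    hcb ((hinv a c).1 (mem_inversions.2 ⟨⟨ha, getElem_mem hc⟩, by omega, h⟩)).2
  have hcb' : ¬ idxOf b u < idxOf c u := fun h =>
    hca ((hinv c b).1 (mem_inversions.2 ⟨⟨getElem_mem hc, hb⟩, by omega, h⟩)).1
  have := (idxOf_inj (huv.mem_iff.2 (getElem_mem hc))).not.2 hca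
  omega

theorem swapAdj_eq_of_inversions_eq_singleton (hv : v.Nodup) (huv : u ~ v) {a b : ℕ}
    (hab : inversions v u = {(a, b)}) : swapAdj v (idxOf a v) = u := by
  have hinv : ∀ x y, (x, y) ∈ inversions v u ↔ x = a ∧ y = b := fun x y => by
    rw [hab, Finset.mem_singleton, Prod.mk.injEq]
  obtain ⟨⟨ha, hb⟩, -, hbu⟩ := mem_inversions.1 ((hinv a b).2 ⟨rfl, rfl⟩)
  have hadj := idxOf_eq_succ_of_inversions_eq_singleton hv huv hab
  have hi : idxOf a v + 1 < v.length := hadj ▸ idxOf_lt_length_iff.2 hb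
  have hs := swapAdj_perm v (idxOf a v)
  refine (eq_of_inversions_eq_empty (hs.nodup_iff.2 hv) (huv.trans hs.symm) ?_).symm
  refine Finset.eq_empty_iff_forall_notMem.2 fun ⟨x, y⟩ hxy => ?_
  rw [mem_inversions, idxOf_swapAdj hv hi, idxOf_swapAdj hv hi, hs.mem_iff, hs.mem_iff] at hxy
  obtain ⟨⟨hx, hy⟩, hxys, hyxu⟩ := hxy
  rw [Equiv.swap_apply_def, Equiv.swap_apply_def] at hxys
  by_cases hxyv : idxOf x v < idxOf y v
  · obtain ⟨rfl, rfl⟩ := (hinv x y).1 (mem_inversions.2 ⟨⟨hx, hy⟩, hxyv, hyxu⟩)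
    split_ifs at hxys <;> omega
  · obtain rfl : x = b := (idxOf_inj hx).1 (by split_ifs at hxys <;> omega)
    obtain rfl : y = a := (idxOf_inj hy).1 (by split_ifs at hxys <;> omega)
    omega

theorem perm_and_listSwapDist_eq_one_iff (hv : v.Nodup) :
    u ~ v ∧ listSwapDist v u = 1 ↔ ∃ i, i + 1 < v.length ∧ swapAdj v i = u := by
  constructor
  · rintro ⟨huv, h⟩
    obtain ⟨⟨a, b⟩, hab⟩ := Finset.card_eq_one.1 h
    have hb : b ∈ v := (mem_inversions.1 (hab ▸ Finset.mem_singleton_self _)).1.2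
    exact ⟨idxOf a v, idxOf_eq_succ_of_inversions_eq_singleton hv huv hab ▸
      idxOf_lt_length_iff.2 hb, swapAdj_eq_of_inversions_eq_singleton hv huv hab⟩
  · rintro ⟨i, hi, rfl⟩
    exact ⟨swapAdj_perm v i, listSwapDist_swapAdj hv hi⟩

theorem two_le_listSwapDist_swapAdj_of_idxOf_lt (hv : v.Nodup) (hwv : w ~ v) (hne : w ≠ v)
    {i : ℕ} (hi : i + 1 < v.length) (hw : idxOf v[i] w < idxOf v[i + 1] w) :
    2 ≤ listSwapDist w (swapAdj v i) := by
  obtain ⟨⟨c, d⟩, hcd⟩ := Finset.nonempty_iff_ne_empty.2 (mt (eq_of_inversions_eq_empty hv hwv) hne)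
  obtain ⟨⟨hc, hd⟩, hcdv, hdcw⟩ := mem_inversions.1 hcd
  refine two_le_listSwapDist (p := (v[i], v[i + 1])) (q := (d, c)) ?_ ?_ ?_
  · rw [mem_inversions, idxOf_swapAdj hv hi, idxOf_swapAdj hv hi, hv.idxOf_getElem,
      hv.idxOf_getElem, hwv.mem_iff, hwv.mem_iff]
    exact ⟨⟨getElem_mem _, getElem_mem _⟩, hw, by simp⟩
  · rw [mem_inversions, idxOf_swapAdj hv hi, idxOf_swapAdj hv hi, hwv.mem_iff, hwv.mem_iff]
    refine ⟨⟨hd, hc⟩, hdcw, ?_⟩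
    by_cases hcase : idxOf c v = i ∧ idxOf d v = i + 1
    · have hci : v[i] = c := (hv.idxOf_eq_iff (by omega)).1 hcase.1
      have hdi : v[i + 1] = d := (hv.idxOf_eq_iff hi).1 hcase.2
      rw [hci, hdi] at hw
      omega
    · rw [Equiv.swap_apply_def, Equiv.swap_apply_def]
      split_ifs <;> omega
  · intro h
    rw [← (Prod.mk.inj h).1, ← (Prod.mk.inj h).2, hv.idxOf_getElem, hv.idxOf_getElem] at hcdv
    omega

end AdjacentTranspositions

section PairsAligned

def PairsAligned (l : List ℕ) : Prop :=
  ∀ i (hi : i + 1 < l.length), Even i → l[i] / 2 = l[i + 1] / 2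

theorem pairsAligned_pair {x y : ℕ} (h : x / 2 = y / 2) : PairsAligned [x, y] := by
  intro i hi _
  obtain rfl : i = 0 := by simp at hi; omega
  exact h

theorem PairsAligned.append {l₁ l₂ : List ℕ} (h₁ : PairsAligned l₁) (h₂ : PairsAligned l₂)
    (he : Even l₁.length) : PairsAligned (l₁ ++ l₂) := by
  intro i hi hie
  rw [length_append] at hi
  rcases lt_or_ge i l₁.length with hlt | hge
  · have hlt' : i + 1 < l₁.length := by
      obtain ⟨r, hr⟩ := he; obtain ⟨s, hs⟩ := hie; omega
    rw [getElem_append_left hlt, getElem_append_left hlt']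
    exact h₁ i hlt' hie
  · rw [getElem_append_right hge, getElem_append_right (by omega)]
    simp only [show i + 1 - l₁.length = i - l₁.length + 1 by omega]
    exact h₂ _ (by omega) ((Nat.even_sub hge).2 (iff_of_true hie he))

theorem PairsAligned.idxOf_div_two_eq {l : List ℕ} (hl : PairsAligned l) (hnd : l.Nodup)
    (hev : Even l.length) {x y : ℕ} (hx : x ∈ l) (hy : y ∈ l) (hxy : x / 2 = y / 2) :
    idxOf x l / 2 = idxOf y l / 2 := by
  have hxl := idxOf_lt_length_iff.2 hx
  obtain ⟨p, hpx⟩ : ∃ p, p = 2 * (idxOf x l / 2) := ⟨_, rfl⟩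
  have hp : p + 1 < l.length := by obtain ⟨r, hr⟩ := hev; omega
  -- `l[p]` and `l[p + 1]` are the only entries with quotient `x / 2`, and `x` is one of them
  have hA := hnd.idxOf_getElem p (by omega)
  have hB := hnd.idxOf_getElem (p + 1) hp
  have hAB := hl p hp ⟨idxOf x l / 2, by omega⟩
  have hAB' : l[p] ≠ l[p + 1] := fun h => by rw [h] at hA; omega
  have hxA := idxOf_inj hx (y := l[p])
  have hxB := idxOf_inj hx (y := l[p + 1])
  have hyA := idxOf_inj hy (y := l[p])
  have hyB := idxOf_inj hy (y := l[p + 1])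
  omega

theorem two_le_listSwapDist_swapAdj_of_pairsAligned {v w : List ℕ} (hv : PairsAligned v)
    (hw : PairsAligned w) (hvn : v.Nodup) (hwv : w ~ v) (hev : Even v.length) {i : ℕ}
    (hi : Odd i) (hil : i + 1 < v.length) (hba : idxOf v[i + 1] w < idxOf v[i] w) :
    2 ≤ listSwapDist w (swapAdj v i) := by
  obtain ⟨j, rfl⟩ := hi
  have hj : 2 * j + 3 < v.length := by obtain ⟨r, hr⟩ := hev; omega
  have hwn : w.Nodup := hwv.nodup_iff.2 hvn
  have hev' : Even w.length := hwv.length_eq ▸ hev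
  have hmem : ∀ p (hp : p < v.length), v[p] ∈ w := fun p hp => hwv.mem_iff.2 (getElem_mem hp)
  have hpos : ∀ p q (hp : p < v.length) (hq : q < v.length),
      idxOf v[p] w = idxOf v[q] w → p = q := fun p q hp hq h => by
    rwa [idxOf_inj (hmem p hp), hvn.getElem_inj_iff] at h
  have hu : ∀ p (hp : p < v.length),
      idxOf v[p] (swapAdj v (2 * j + 1)) = Equiv.swap (2 * j + 1) (2 * j + 1 + 1) p := by
    intro p hp
    rw [idxOf_swapAdj hvn hil, hvn.idxOf_getElem]
  -- `w` keeps the aligned pairs `v[2j], v[2j+1]` and `v[2j+2], v[2j+3]` contiguous, so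
  -- reversing `v[2j+1], v[2j+2]` also reverses `v[2j], v[2j+2]` and `v[2j+1], v[2j+3]`
  have hba : idxOf v[2 * j + 2] w < idxOf v[2 * j + 1] w := hba
  have h₁ : idxOf v[2 * j] w / 2 = idxOf v[2 * j + 1] w / 2 :=
    hw.idxOf_div_two_eq hwn hev' (hmem _ _) (hmem _ _) (hv (2 * j) (by omega) (even_two_mul j))
  have h₂ : idxOf v[2 * j + 2] w / 2 = idxOf v[2 * j + 3] w / 2 :=
    hw.idxOf_div_two_eq hwn hev' (hmem _ _) (hmem _ _) (hv (2 * j + 2) (by omega) ⟨j + 1, by ring⟩)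
  have h₃ := hpos (2 * j) (2 * j + 1) (by omega) (by omega)
  have h₄ := hpos (2 * j + 1) (2 * j + 2) (by omega) (by omega)
  have h₅ := hpos (2 * j) (2 * j + 2) (by omega) (by omega)
  refine two_le_listSwapDist (p := (v[2 * j + 2], v[2 * j])) (q := (v[2 * j + 3], v[2 * j + 1]))
    ?_ ?_ ?_
  · rw [mem_inversions, hu _ (by omega), hu _ (by omega)]
    refine ⟨⟨hmem _ _, hmem _ _⟩, by omega, ?_⟩
    simp only [Equiv.swap_apply_def]
    split_ifs <;> omega
  · rw [mem_inversions, hu _ (by omega), hu _ (by omega)]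
    refine ⟨⟨hmem _ _, hmem _ _⟩, by omega, ?_⟩
    simp only [Equiv.swap_apply_def]
    split_ifs <;> omega
  · simp [hvn.getElem_inj_iff]

end PairsAligned

namespace IsBal

variable {k o : ℕ} {l v w : List ℕ}

theorem perm_range' (h : IsBal k o l) : l ~ range' o (2 ^ k) := by
  induction h with
  | leaf o => simp [range'_one]
  | node _ _ ih₁ ih₂ =>
    rw [pow_succ, mul_two, ← range'_append_1]
    exact ih₁.append ih₂
  | nodeRev _ _ ih₁ ih₂ =>
    rw [pow_succ, mul_two, ← range'_append_1]
    exact perm_append_comm.trans (ih₁.append ih₂)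

theorem length (h : IsBal k o l) : l.length = 2 ^ k := by
  simpa using h.perm_range'.length_eq

theorem nodup (h : IsBal k o l) : l.Nodup :=
  h.perm_range'.nodup_iff.2 nodup_range'

theorem perm (hv : IsBal k o v) (hw : IsBal k o w) : v ~ w :=
  hv.perm_range'.trans hw.perm_range'.symm

theorem even_length (h : IsBal k o l) (hk : k ≠ 0) : Even l.length :=
  h.length ▸ Nat.even_pow.2 ⟨even_two, hk⟩

theorem pairsAligned (h : IsBal k o l) (ho : Even o) : PairsAligned l := by
  induction h with
  | leaf => intro i hi; simp at hi
  | @node k o l₁ l₂ h₁ h₂ ih₁ ih₂ =>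
    rcases Nat.eq_zero_or_pos k with rfl | hk
    · cases h₁; cases h₂
      obtain ⟨r, rfl⟩ := ho
      exact pairsAligned_pair (by simp; omega)
    · exact (ih₁ ho).append (ih₂ (ho.add (Nat.even_pow.2 ⟨even_two, hk.ne'⟩)))
        (h₁.even_length hk.ne')
  | @nodeRev k o l₁ l₂ h₁ h₂ ih₁ ih₂ =>
    rcases Nat.eq_zero_or_pos k with rfl | hk
    · cases h₁; cases h₂
      obtain ⟨r, rfl⟩ := ho
      exact pairsAligned_pair (by simp; omega)
    · exact (ih₂ (ho.add (Nat.even_pow.2 ⟨even_two, hk.ne'⟩))).append (ih₁ ho)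
        (h₂.even_length hk.ne')

theorem swapAdj_of_even (h : IsBal k o l) {i : ℕ} (hi : Even i) (hil : i + 1 < l.length) :
    IsBal k o (swapAdj l i) := by
  induction h generalizing i with
  | leaf => simp at hil
  | @node k o l₁ l₂ h₁ h₂ ih₁ ih₂ =>
    rcases Nat.eq_zero_or_pos k with rfl | hk
    · cases h₁; cases h₂
      obtain rfl : i = 0 := by simp at hil; omega
      exact nodeRev (leaf o) (leaf _)
    · have he := h₁.even_length hk.ne'
      rw [length_append] at hil
      rcases lt_or_ge (i + 1) l₁.length with hlt | hge
      · rw [swapAdj_append_left _ hlt]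
        exact (ih₁ hi hlt).node h₂
      · obtain ⟨j, rfl⟩ : ∃ j, i = l₁.length + j := ⟨i - l₁.length, by
          obtain ⟨r, hr⟩ := he; obtain ⟨s, hs⟩ := hi; omega⟩
        rw [swapAdj_append_right]
        exact h₁.node (ih₂ ((Nat.even_add.1 hi).1 he) (by omega))
  | @nodeRev k o l₁ l₂ h₁ h₂ ih₁ ih₂ =>
    rcases Nat.eq_zero_or_pos k with rfl | hk
    · cases h₁; cases h₂
      obtain rfl : i = 0 := by simp at hil; omega
      exact node (leaf o) (leaf _)
    · have he := h₂.even_length hk.ne'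
      rw [length_append] at hil
      rcases lt_or_ge (i + 1) l₂.length with hlt | hge
      · rw [swapAdj_append_left _ hlt]
        exact h₁.nodeRev (ih₂ hi hlt)
      · obtain ⟨j, rfl⟩ : ∃ j, i = l₂.length + j := ⟨i - l₂.length, by
          obtain ⟨r, hr⟩ := he; obtain ⟨s, hs⟩ := hi; omega⟩
        rw [swapAdj_append_right]
        exact (ih₁ ((Nat.even_add.1 hi).1 he) (by omega)).nodeRev h₂

theorem two_le_listSwapDist_swapAdj (hv : IsBal k o v) (hw : IsBal k o w) (ho : Even o)
    (hwv : w ≠ v) {i : ℕ} (hi : Odd i) (hil : i + 1 < v.length) :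
    2 ≤ listSwapDist w (swapAdj v i) := by
  have hperm := hw.perm hv
  have hne : idxOf v[i] w ≠ idxOf v[i + 1] w := by
    rw [Ne, idxOf_inj (hperm.mem_iff.2 (getElem_mem _)), hv.nodup.getElem_inj_iff]
    omega
  rcases hne.lt_or_gt with hlt | hgt
  · exact two_le_listSwapDist_swapAdj_of_idxOf_lt hv.nodup hperm hwv hil hlt
  · have hk : k ≠ 0 := by
      rintro rfl
      obtain ⟨r, rfl⟩ := hi
      simp [hv.length] at hil
    exact two_le_listSwapDist_swapAdj_of_pairsAligned (hv.pairsAligned ho) (hw.pairsAligned ho)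
      hv.nodup hperm (hv.even_length hk) hi hil hgt

theorem isBal_swapAdj_iff (hv : IsBal k o v) (ho : Even o) {i : ℕ} (hil : i + 1 < v.length) :
    IsBal k o (swapAdj v i) ↔ Even i := by
  refine ⟨fun hu => Nat.not_odd_iff_even.1 fun hi => ?_, fun hi => hv.swapAdj_of_even hi hil⟩
  -- otherwise `swapAdj v i` would be a member of the domain at distance two from itself
  have hne : swapAdj v i ≠ v := fun h => by
    simpa [h, listSwapDist_self] using listSwapDist_swapAdj hv.nodup hil
  simpa [listSwapDist_self] using hv.two_le_listSwapDist_swapAdj hu ho hne hi hil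

end IsBal

theorem card_subtype_eq_of_injOn_Iio {α : Type*} {p : α → Prop} {f : ℕ → α} {N : ℕ}
    (hf : Set.InjOn f (Set.Iio N)) (hp : ∀ a, p a ↔ ∃ j < N, f j = a) :
    Nat.card {a // p a} = N := by
  have : {a | p a} = f '' Set.Iio N := by
    ext a
    simp [hp]
  rw [← Set.coe_ofPred, this, Nat.card_coe_set_eq, hf.ncard_image, Set.ncard_Iio_nat]

theorem stmt10 (k : ℕ) (hk : 1 ≤ k) (v : List ℕ) (hv : IsBal k 0 v) :
    -- v has exactly m - 1 = 2^k - 1 adjacent-transposition neighbors …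
    Nat.card {u : List ℕ // u.Perm v ∧ listSwapDist v u = 1} = 2 ^ k - 1 ∧
    -- … of which m/2 lie in the domain …
    Nat.card {u : List ℕ // u.Perm v ∧ listSwapDist v u = 1 ∧ IsBal k 0 u}
      = 2 ^ (k - 1) ∧
    -- … and exactly 2^{k-1} - 1 = m/2 - 1 lie outside the domain and have v as
    -- their unique nearest member of the domain (distance > 1 to all others).
    Nat.card {u : List ℕ // u.Perm v ∧ listSwapDist v u = 1 ∧ ¬ IsBal k 0 u ∧
        ∀ w : List ℕ, IsBal k 0 w → w ≠ v → 2 ≤ listSwapDist w u}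
      = 2 ^ (k - 1) - 1 := by
  obtain ⟨m, rfl⟩ : ∃ m, k = m + 1 := ⟨k - 1, by omega⟩
  have hlen : v.length = 2 * 2 ^ m := by rw [hv.length, pow_succ']
  have hcount : ∀ {p : List ℕ → Prop} {f : ℕ → ℕ} {N : ℕ}, f.Injective →
      (∀ j < N, f j + 1 < v.length) → (∀ u, p u ↔ ∃ j < N, swapAdj v (f j) = u) →
      Nat.card {u // p u} = N :=
    fun hf hN hp => card_subtype_eq_of_injOn_Iio ((swapAdj_injOn hv.nodup).comp hf.injOn hN) hp
  have hD := fun {i} => hv.isBal_swapAdj_iff .zero (i := i)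
  simp only [Nat.add_sub_cancel]
  refine ⟨hcount (f := id) Function.injective_id (fun j hj => by simp; omega) fun u => ?_,
    hcount (f := (2 * ·)) (fun a b h => by simpa using h) (fun j hj => by omega) fun u => ?_,
    hcount (f := (2 * · + 1)) (fun a b h => by simpa using h) (fun j hj => by omega) fun u => ?_⟩
  · rw [perm_and_listSwapDist_eq_one_iff hv.nodup]
    exact ⟨fun ⟨i, hi, hu⟩ => ⟨i, by rw [pow_succ']; omega, hu⟩,
      fun ⟨i, hi, hu⟩ => ⟨i, by rw [pow_succ'] at hi; omega, hu⟩⟩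
  · rw [← and_assoc, perm_and_listSwapDist_eq_one_iff hv.nodup]
    constructor
    · rintro ⟨⟨i, hi, rfl⟩, hu⟩
      obtain ⟨j, rfl⟩ := (hD hi).1 hu
      exact ⟨j, by omega, by rw [two_mul]⟩
    · rintro ⟨j, hj, rfl⟩
      exact ⟨⟨2 * j, by omega, rfl⟩, (hD (by omega)).2 (even_two_mul j)⟩
  · rw [← and_assoc, perm_and_listSwapDist_eq_one_iff hv.nodup]
    constructor
    · rintro ⟨⟨i, hi, rfl⟩, hu, -⟩
      obtain ⟨j, rfl⟩ := Nat.not_even_iff_odd.1 (mt (hD hi).2 hu)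
      exact ⟨j, by omega, rfl⟩
    · rintro ⟨j, hj, rfl⟩
      have hil : 2 * j + 1 + 1 < v.length := by omega
      exact ⟨⟨_, hil, rfl⟩, fun hu => Nat.not_even_two_mul_add_one j ((hD hil).1 hu),
        fun w hw hwv => hv.two_le_listSwapDist_swapAdj hw .zero hwv (odd_two_mul_add_one j) hil⟩
end

section
/- For every domain D ⊆ L(C), ansd(D)·C(m,2) is achieved as the minimum over all D-elections E of the normalized isomorphic swap distance between the uniform election UN (one voter per ranking in L(C)) and E; i.e., min over D-elections E of d_swap(UN, E) equals (1/m!) Σ_{u∈L(C)} swap(D, u). -/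
/-- Isomorphic swap distance between elections `V` (with `n` voters) and `U` (with
`k` voters): votes are cyclically duplicated to `n·k` voters each, and we minimize
over matchings `π` of the voters and relabelings `σ` of the candidates; the result
is divided by `n·k`. Here `σ(v) = v * σ⁻¹` is the vote `v` with every candidate `c`
replaced by `σ c`. -/
noncomputable def dswap {m n k : ℕ} (hn : 0 < n) (hk : 0 < k)
    (V : Fin n → Equiv.Perm (Fin m)) (U : Fin k → Equiv.Perm (Fin m)) : ℚ :=
  (((Finset.univ : Finset (Equiv.Perm (Fin (n * k)) × Equiv.Perm (Fin m))).inf'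
      Finset.univ_nonempty
      (fun p => ∑ i : Fin (n * k),
        swapDist ((V ⟨(i : ℕ) % n, Nat.mod_lt _ hn⟩) * p.2⁻¹)
          (U ⟨((p.1 i : ℕ)) % k, Nat.mod_lt _ hk⟩)) : ℚ)) / ((n : ℚ) * k)

/-- The uniform election: one voter per ranking in `L(C)`. -/
noncomputable def UN (m : ℕ) :
    Fin (Fintype.card (Equiv.Perm (Fin m))) → Equiv.Perm (Fin m) :=
  fun j => (Fintype.equivFin (Equiv.Perm (Fin m))).symm j

/-!
Fix a relabeling `σ` and a matching `π` of the cyclically repeated voters. Relabeling permutes the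
rankings of `UN`, so every ranking `u` still occurs exactly `n` times among the `N·n` voters of `UN`,
and each of them is matched to a vote of `D`, at distance at least `swap(D, u)`. Hence every
`D`-election is at distance at least `(1/N) Σ_u swap(D, u)` from `UN`, where `N = m!`. Equality holds
for the election that contains, for each ranking `u`, a ranking of `D` closest to `u`, matched to `u`.
-/

open Finset

lemma swapDist_comm {m : ℕ} (u v : Equiv.Perm (Fin m)) : swapDist u v = swapDist v u := by
  unfold swapDist
  refine card_bij (fun p _ => p.swap) ?_ ?_ ?_
  · simp +contextual [and_comm]
  · intro a _ b _ h
    simpa using h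
  · intro b hb
    exact ⟨b.swap, by simpa [and_comm] using hb, by simp⟩

lemma domDist_le_swapDist {m : ℕ} {D : Finset (Equiv.Perm (Fin m))} {w : Equiv.Perm (Fin m)}
    (hw : w ∈ D) (u : Equiv.Perm (Fin m)) : domDist D u ≤ swapDist w u :=
  Nat.sInf_le ⟨w, hw, rfl⟩

lemma exists_mem_swapDist_eq_domDist {m : ℕ} {D : Finset (Equiv.Perm (Fin m))}
    (hD : D.Nonempty) (u : Equiv.Perm (Fin m)) : ∃ w ∈ D, swapDist w u = domDist D u :=
  Nat.sInf_mem (hD.to_set.image _)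

lemma sum_fin_mul_mod {β : Type*} [AddCommMonoid β] {M : ℕ} (hM : 0 < M) (n : ℕ)
    (f : Fin M → β) :
    ∑ i : Fin (M * n), f ⟨(i : ℕ) % M, Nat.mod_lt _ hM⟩ = n • ∑ j, f j := by
  rw [← (finProdFinEquiv.trans (finCongr (Nat.mul_comm n M))).sum_comp, Fintype.sum_prod_type]
  simp [finProdFinEquiv, Nat.mod_eq_of_lt]

lemma sum_UN {β : Type*} [AddCommMonoid β] (m : ℕ) (f : Equiv.Perm (Fin m) → β) :
    ∑ j, f (UN m j) = ∑ u, f u :=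
  (Fintype.equivFin _).symm.sum_comp f

lemma sum_UN_mul_right {β : Type*} [AddCommMonoid β] (m : ℕ) (σ : Equiv.Perm (Fin m))
    (f : Equiv.Perm (Fin m) → β) : ∑ j, f (UN m j * σ) = ∑ u, f u :=
  (sum_UN m fun u => f (u * σ)).trans (Equiv.sum_comp (Equiv.mulRight σ) f)

def matchingCost {m n k : ℕ} (hn : 0 < n) (hk : 0 < k) (V : Fin n → Equiv.Perm (Fin m))
    (U : Fin k → Equiv.Perm (Fin m)) (p : Equiv.Perm (Fin (n * k)) × Equiv.Perm (Fin m)) : ℕ :=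
  ∑ i : Fin (n * k),
    swapDist (V ⟨(i : ℕ) % n, Nat.mod_lt _ hn⟩ * p.2⁻¹) (U ⟨(p.1 i : ℕ) % k, Nat.mod_lt _ hk⟩)

section dswap

variable {m n k : ℕ} (hn : 0 < n) (hk : 0 < k) (V : Fin n → Equiv.Perm (Fin m))
  (U : Fin k → Equiv.Perm (Fin m))

lemma dswap_eq_inf'_matchingCost :
    dswap hn hk V U =
      univ.inf' univ_nonempty (fun p => (matchingCost hn hk V U p : ℚ)) / (n * k) := by
  simp only [dswap, matchingCost, Nat.cast_sum]

lemma le_dswap_of_le_matchingCost {c : ℕ} (h : ∀ p, c ≤ matchingCost hn hk V U p) :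
    (c : ℚ) / (n * k) ≤ dswap hn hk V U := by
  rw [dswap_eq_inf'_matchingCost]
  gcongr
  exact le_inf' univ_nonempty _ fun p _ => by exact_mod_cast h p

lemma dswap_le_matchingCost (p : Equiv.Perm (Fin (n * k)) × Equiv.Perm (Fin m)) :
    dswap hn hk V U ≤ (matchingCost hn hk V U p : ℚ) / (n * k) := by
  rw [dswap_eq_inf'_matchingCost]
  gcongr
  exact inf'_le _ (mem_univ p)

end dswap

section uniform

variable {m : ℕ} (D : Finset (Equiv.Perm (Fin m)))

local notation "N" => Fintype.card (Equiv.Perm (Fin m))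

lemma sum_domDist_le_matchingCost {n : ℕ} (hn : 0 < n) {V : Fin n → Equiv.Perm (Fin m)}
    (hV : ∀ i, V i ∈ D) (p : Equiv.Perm (Fin (N * n)) × Equiv.Perm (Fin m)) :
    n * ∑ u, domDist D u ≤ matchingCost Fintype.card_pos hn (UN m) V p := by
  calc n * ∑ u, domDist D u
      = ∑ i : Fin (N * n),
          domDist D (UN m ⟨(i : ℕ) % N, Nat.mod_lt _ Fintype.card_pos⟩ * p.2⁻¹) := by
        rw [sum_fin_mul_mod Fintype.card_pos n (fun j => domDist D (UN m j * p.2⁻¹)),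
          sum_UN_mul_right, smul_eq_mul]
    _ ≤ matchingCost Fintype.card_pos hn (UN m) V p :=
        sum_le_sum fun i _ => (domDist_le_swapDist (hV _) _).trans_eq (swapDist_comm _ _)

lemma sum_domDist_div_le_dswap {n : ℕ} (hn : 0 < n) {V : Fin n → Equiv.Perm (Fin m)}
    (hV : ∀ i, V i ∈ D) :
    (∑ u, (domDist D u : ℚ)) / N ≤ dswap Fintype.card_pos hn (UN m) V := by
  have h := le_dswap_of_le_matchingCost Fintype.card_pos hn (UN m) V
    (sum_domDist_le_matchingCost D hn hV)
  have hn' : (n : ℚ) ≠ 0 := by positivity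
  rwa [Nat.cast_mul, Nat.cast_sum, mul_comm (N : ℚ), mul_div_mul_left _ _ hn'] at h

noncomputable def closestElection (hD : D.Nonempty) : Fin N → Equiv.Perm (Fin m) :=
  fun j => (exists_mem_swapDist_eq_domDist hD (UN m j)).choose

lemma closestElection_mem (hD : D.Nonempty) (j : Fin N) : closestElection D hD j ∈ D :=
  (exists_mem_swapDist_eq_domDist hD (UN m j)).choose_spec.1

lemma matchingCost_closestElection_one (hD : D.Nonempty) :
    matchingCost Fintype.card_pos Fintype.card_pos (UN m) (closestElection D hD) 1 =
      N * ∑ u, domDist D u := by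
  have hterm (j : Fin N) : swapDist (UN m j) (closestElection D hD j) = domDist D (UN m j) :=
    (swapDist_comm _ _).trans (exists_mem_swapDist_eq_domDist hD (UN m j)).choose_spec.2
  simp only [matchingCost, Prod.fst_one, Prod.snd_one, inv_one, mul_one, Equiv.Perm.coe_one,
    id_eq, hterm]
  rw [sum_fin_mul_mod Fintype.card_pos N (fun j => domDist D (UN m j)), smul_eq_mul, sum_UN]

lemma dswap_closestElection (hD : D.Nonempty) :
    dswap Fintype.card_pos Fintype.card_pos (UN m) (closestElection D hD) =
      (∑ u, (domDist D u : ℚ)) / N := by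
  refine le_antisymm ?_ (sum_domDist_div_le_dswap D _ (closestElection_mem D hD))
  refine (dswap_le_matchingCost _ _ _ _ 1).trans_eq ?_
  have hN : (N : ℚ) ≠ 0 := by positivity
  rw [matchingCost_closestElection_one, Nat.cast_mul, Nat.cast_sum, mul_div_mul_left _ _ hN]

end uniform

theorem stmt12_general (m : ℕ) (D : Finset (Equiv.Perm (Fin m)))
    (hD : D.Nonempty) :
    IsLeast
      {q : ℚ | ∃ (n : ℕ) (hn : 0 < n) (V : Fin n → Equiv.Perm (Fin m)),
        (∀ i, V i ∈ D) ∧ q = dswap Fintype.card_pos hn (UN m) V}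
      ((∑ u : Equiv.Perm (Fin m), (domDist D u : ℚ)) / (Nat.factorial m)) := by
  have hcard : (Nat.factorial m : ℚ) = Fintype.card (Equiv.Perm (Fin m)) := by
    rw [Fintype.card_perm, Fintype.card_fin]
  rw [hcard]
  refine ⟨⟨_, Fintype.card_pos, closestElection D hD, closestElection_mem D hD,
    (dswap_closestElection D hD).symm⟩, ?_⟩
  rintro q ⟨n, hn, V, hV, rfl⟩
  exact sum_domDist_div_le_dswap D hn hV

theorem stmt12 (m : ℕ) (hm : 1 ≤ m) (D : Finset (Equiv.Perm (Fin m)))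
    (hD : D.Nonempty) :
    IsLeast
      {q : ℚ | ∃ (n : ℕ) (hn : 0 < n) (V : Fin n → Equiv.Perm (Fin m)),
        (∀ i, V i ∈ D) ∧ q = dswap Fintype.card_pos hn (UN m) V}
      ((∑ u : Equiv.Perm (Fin m), (domDist D u : ℚ)) / (Nat.factorial m)) :=
  stmt12_general m D hD
end

section
/- Every ranking single-peaked on a cycle of m candidates is single-peaked with respect to one of the m paths obtained by removing a single edge of the cycle; hence the single-peaked-on-a-circle domain over m ≥ 3 candidates has exactly m·2^{m-2} rankings. -/
/-- A finset of `Fin m` is a contiguous arc of the cycle `c_0, c_1, …, c_{m-1}, c_0`. -/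
def IsArc {m : ℕ} (S : Finset (Fin m)) : Prop :=
  S = ∅ ∨ ∃ (a : Fin m) (len : ℕ),
    S = (Finset.range len).image (fun j => (⟨((a : ℕ) + j) % m, Nat.mod_lt _ a.pos⟩ : Fin m))

/-- A ranking (candidate ↦ position) is single-peaked on the circle iff each of its
top-`t` sets is a contiguous arc of the cycle. -/
def IsSPOC {m : ℕ} (v : Equiv.Perm (Fin m)) : Prop :=
  ∀ t : ℕ, IsArc (Finset.univ.filter (fun c => (v c : ℕ) < t))

/-- A ranking is single-peaked with respect to the path obtained from the cycle by
deleting the edge `{c_{s-1}, c_s}` (i.e., the path `c_s, c_{s+1}, …, c_{s-1}`,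
indices mod `m`) iff each of its top-`t` sets is an interval of that path. -/
def IsSPPath {m : ℕ} (s : Fin m) (v : Equiv.Perm (Fin m)) : Prop :=
  ∀ t : ℕ, ∃ lo hi : ℕ, hi ≤ m ∧
    Finset.univ.filter (fun c => (v c : ℕ) < t) =
      (Finset.Ico lo hi).image (fun j => (⟨((s : ℕ) + j) % m, Nat.mod_lt _ s.pos⟩ : Fin m))

/-
The top-`t` sets of a ranking single-peaked on the circle form a chain of arcs, each obtained from
the previous one by adding the neighbour on the left or on the right. All of them lie in the arc of
the top `m - 1` candidates, so they are intervals of the path that starts right after the bottom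
candidate and ends at it. Conversely, the ranking is determined by its top candidate and the
sequence of left/right choices; the first and the last choice are forced, the other `m - 2` are
free.
-/

namespace CircleSinglePeaked

open Finset Fin.NatCast Fin.CommRing

variable {m : ℕ}

def topSet (v : Equiv.Perm (Fin m)) (t : ℕ) : Finset (Fin m) :=
  univ.filter fun c => (v c : ℕ) < t

lemma topSet_zero (v : Equiv.Perm (Fin m)) : topSet v 0 = ∅ := by
  simp [topSet]

lemma topSet_min (v : Equiv.Perm (Fin m)) (t : ℕ) : topSet v (min t m) = topSet v t := by
  ext c
  simp [topSet]

lemma topSet_eq_univ (v : Equiv.Perm (Fin m)) {t : ℕ} (h : m ≤ t) : topSet v t = univ := by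
  ext c
  simpa [topSet] using (v c).isLt.trans_le h

lemma topSet_mono (v : Equiv.Perm (Fin m)) : Monotone (topSet v) :=
  fun _ _ h _ => by simp only [topSet, mem_filter, mem_univ, true_and]; omega

lemma card_topSet (v : Equiv.Perm (Fin m)) {t : ℕ} (ht : t ≤ m) : #(topSet v t) = t := by
  have : topSet v t = (univ.filter fun i : Fin m => (i : ℕ) < t).map v.symm.toEmbedding := by
    ext c
    simp [topSet]
  rw [this, card_map, Fin.card_filter_val_lt, min_eq_right ht]

lemma eq_of_topSet_eq {v w : Equiv.Perm (Fin m)} (h : ∀ t ≤ m, topSet v t = topSet w t) :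
    v = w := by
  have hle : ∀ {v w : Equiv.Perm (Fin m)}, (∀ t ≤ m, topSet v t = topSet w t) →
      ∀ c, (w c : ℕ) ≤ v c := fun {v w} h c => by
    have : c ∈ topSet w (v c + 1) := h _ (v c).isLt ▸ by simp [topSet]
    simpa [topSet, Nat.lt_succ_iff] using this
  ext c
  exact le_antisymm (hle (fun t ht => (h t ht).symm) c) (hle h c)

variable [NeZero m]

lemma topSet_succ (v : Equiv.Perm (Fin m)) {t : ℕ} (ht : t < m) :
    topSet v (t + 1) = insert (v.symm t) (topSet v t) := by
  ext c
  simp [topSet, Equiv.eq_symm_apply, Fin.ext_iff, Nat.mod_eq_of_lt ht, le_iff_eq_or_lt]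

lemma symm_notMem_topSet (v : Equiv.Perm (Fin m)) {t : ℕ} (ht : t < m) :
    v.symm t ∉ topSet v t := by
  simp [topSet, Nat.mod_eq_of_lt ht]

def arc (a : Fin m) (len : ℕ) : Finset (Fin m) :=
  (range len).image fun j : ℕ => a + (j : Fin m)

lemma mk_add_mod_eq (a : Fin m) (j : ℕ) :
    (⟨((a : ℕ) + j) % m, Nat.mod_lt _ a.pos⟩ : Fin m) = a + j := by
  ext
  simp [Fin.add_def, Fin.val_natCast, Nat.add_mod]

lemma arc_eq_image_mk (a : Fin m) (len : ℕ) :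
    arc a len =
      (range len).image (fun j => (⟨((a : ℕ) + j) % m, Nat.mod_lt _ a.pos⟩ : Fin m)) :=
  image_congr fun j _ => (mk_add_mod_eq a j).symm

lemma natCast_inj_of_lt {j k : ℕ} (hj : j < m) (hk : k < m) (h : (j : Fin m) = k) : j = k := by
  simpa [Fin.ext_iff, Fin.val_natCast, Nat.mod_eq_of_lt hj, Nat.mod_eq_of_lt hk] using h

lemma mem_arc {x a : Fin m} {len : ℕ} : x ∈ arc a len ↔ ∃ j < len, x = a + j := by
  simp [arc, eq_comm]

lemma self_mem_arc (a : Fin m) {len : ℕ} (h : 0 < len) : a ∈ arc a len :=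
  mem_arc.2 ⟨0, h, by simp⟩

lemma add_natCast_notMem_arc (a : Fin m) {k len : ℕ} (hk : len ≤ k) (hkm : k < m) :
    a + k ∉ arc a len := by
  rw [mem_arc]
  rintro ⟨j, hj, h⟩
  have := natCast_inj_of_lt hkm (by omega) (add_left_cancel h)
  omega

lemma sub_one_notMem_arc (a : Fin m) {len : ℕ} (h : len < m) : a - 1 ∉ arc a len := by
  have hcast : ((m - 1 : ℕ) : Fin m) = -1 := by
    rw [Nat.cast_sub NeZero.one_le, Fin.natCast_self, Nat.cast_one, zero_sub]
  simpa [sub_eq_add_neg, hcast] using add_natCast_notMem_arc a (k := m - 1) (by omega) (by omega)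

lemma card_arc (a : Fin m) {len : ℕ} (h : len ≤ m) : #(arc a len) = len := by
  rw [arc, card_image_of_injOn, card_range]
  intro j hj k hk hjk
  exact natCast_inj_of_lt (by simp at hj; omega) (by simp at hk; omega) (add_left_cancel hjk)

lemma arc_eq_univ (a : Fin m) {len : ℕ} (h : m ≤ len) : arc a len = univ := by
  refine eq_univ_of_forall fun x => mem_arc.2 ⟨(x - a : Fin m).val, by omega, ?_⟩
  simp

lemma arc_succ (a : Fin m) (len : ℕ) : arc a (len + 1) = insert (a + len) (arc a len) := by
  simp [arc, range_add_one]

lemma arc_sub_one_succ (a : Fin m) (len : ℕ) :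
    arc (a - 1) (len + 1) = insert (a - 1) (arc a len) := by
  rw [arc, range_add_one', image_insert, map_eq_image, image_image, arc]
  congr 1
  · simp
  · exact image_congr fun j _ => by
      change a - 1 + ((j + 1 : ℕ) : Fin m) = a + j
      push_cast; ring

lemma exists_eq_add_of_arc_subset {a b : Fin m} {t n : ℕ} (ht : 0 < t) (hn : n < m)
    (h : arc a t ⊆ arc b n) : ∃ d : ℕ, d + t ≤ n ∧ a = b + (d : Fin m) := by
  obtain ⟨d, hd, rfl⟩ := mem_arc.1 (h (self_mem_arc a ht))
  refine ⟨d, ?_, rfl⟩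
  by_contra! hlong
  -- the wrapped-around arc `b + d, …, b + d + t - 1` passes through `b + n`
  have hbn : b + (n : Fin m) ∈ arc (b + (d : Fin m)) t :=
    mem_arc.2 ⟨n - d, by omega, by rw [add_assoc, ← Nat.cast_add, Nat.add_sub_cancel' hd.le]⟩
  exact add_natCast_notMem_arc b le_rfl hn (h hbn)

lemma arc_add_eq_image_Ico (s : Fin m) (d t : ℕ) :
    arc (s + (d : Fin m)) t =
      (Ico d (d + t)).image (fun j => (⟨((s : ℕ) + j) % m, Nat.mod_lt _ s.pos⟩ : Fin m)) := by
  have hIco : Ico d (d + t) = (range t).image (d + ·) := by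
    rw [range_eq_Ico, image_add_left_Ico, add_zero]
  rw [hIco, image_image, arc]
  exact image_congr fun j _ => by simp [mk_add_mod_eq, add_assoc]

lemma isArc_iff {S : Finset (Fin m)} : IsArc S ↔ S = ∅ ∨ ∃ a len, S = arc a len := by
  simp only [IsArc, arc_eq_image_mk]

lemma exists_eq_arc_card {S : Finset (Fin m)} (h : IsArc S) : ∃ a, S = arc a #S := by
  obtain rfl | ⟨a, len, rfl⟩ := isArc_iff.1 h
  · exact ⟨0, by simp [arc]⟩
  refine ⟨a, ?_⟩
  rcases le_total len m with hlen | hlen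
  · rw [card_arc a hlen]
  · rw [arc_eq_univ a hlen, card_univ, Fintype.card_fin, arc_eq_univ a le_rfl]

lemma exists_topSet_eq_arc {v : Equiv.Perm (Fin m)} (hv : IsSPOC v) {t : ℕ} (ht : t ≤ m) :
    ∃ a, topSet v t = arc a t := by
  obtain ⟨a, ha⟩ := exists_eq_arc_card (S := topSet v t) (hv t)
  exact ⟨a, by rwa [card_topSet v ht] at ha⟩

theorem exists_isSPPath {v : Equiv.Perm (Fin m)} (hv : IsSPOC v) : ∃ s, IsSPPath s v := by
  obtain ⟨s, hs⟩ := exists_topSet_eq_arc hv (Nat.sub_le m 1)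
  have key : ∀ t ≤ m, ∃ d : ℕ, d + t ≤ m ∧ topSet v t = arc (s + (d : Fin m)) t := by
    intro t ht
    obtain rfl | htm | ⟨ht0, htm⟩ : t = 0 ∨ t = m ∨ (0 < t ∧ t ≤ m - 1) := by omega
    · exact ⟨0, by omega, by simp [topSet_zero, arc]⟩
    · exact ⟨0, by omega, by rw [topSet_eq_univ v htm.ge, arc_eq_univ _ htm.ge]⟩
    obtain ⟨a, ha⟩ := exists_topSet_eq_arc hv ht
    have hsub : arc a t ⊆ arc s (m - 1) := ha ▸ hs ▸ topSet_mono v htm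
    obtain ⟨d, hd, rfl⟩ := exists_eq_add_of_arc_subset ht0 (by omega) hsub
    exact ⟨d, by omega, ha⟩
  refine ⟨s, fun t => ?_⟩
  obtain ⟨d, hd, h⟩ := key (min t m) (min_le_right t m)
  refine ⟨d, d + min t m, hd, ?_⟩
  change topSet v t = _
  rw [← topSet_min, h, arc_add_eq_image_Ico]

lemma eq_ite_of_insert_eq_arc {l l' x : Fin m} {t : ℕ} (ht : 0 < t) (htm : t + 1 < m)
    (hx : x ∉ arc l t) (h : insert x (arc l t) = arc l' (t + 1)) :
    l' = if x + 1 ∈ arc l t then l - 1 else l := by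
  obtain ⟨d, hd, hl⟩ := exists_eq_add_of_arc_subset ht htm (h ▸ subset_insert x _)
  obtain rfl | rfl : d = 0 ∨ d = 1 := by omega
  · obtain rfl : l' = l := by simpa using hl.symm
    rw [arc_succ, insert_inj hx] at h
    have hx1 : x + 1 ∉ arc l' t := by
      rw [h, add_assoc, ← Nat.cast_add_one]
      exact add_natCast_notMem_arc l' (Nat.le_succ t) htm
    rw [if_neg hx1]
  · obtain rfl : l' = l - 1 := by rw [hl]; simp
    rw [arc_sub_one_succ, insert_inj hx] at h
    rw [if_pos (by rw [h, sub_add_cancel]; exact self_mem_arc l ht)]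

section Decode

variable (b : ℕ → Bool) (a : Fin m)

/-- Reading `b t = true` as "the `(t+1)`-st candidate is added at the left end", this is the
start of the arc of the top `t` candidates of the ranking with top candidate `a`. -/
def arcStart : ℕ → Fin m
  | 0 => a
  | t + 1 => if b t then arcStart t - 1 else arcStart t

def addedCand (t : ℕ) : Fin m :=
  if b t then arcStart b a t - 1 else arcStart b a t + t

lemma arc_arcStart_succ (t : ℕ) :
    arc (arcStart b a (t + 1)) (t + 1) = insert (addedCand b a t) (arc (arcStart b a t) t) := by
  rw [arcStart, addedCand]
  split
  · rw [arc_sub_one_succ]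
  · rw [arc_succ]

lemma addedCand_notMem_arc {t : ℕ} (ht : t < m) : addedCand b a t ∉ arc (arcStart b a t) t := by
  rw [addedCand]
  split
  · exact sub_one_notMem_arc _ ht
  · exact add_natCast_notMem_arc _ le_rfl ht

lemma monotone_arc_arcStart : Monotone fun t => arc (arcStart b a t) t :=
  monotone_nat_of_le_succ fun t => by
    simp only [arc_arcStart_succ]
    exact subset_insert _ _

lemma addedCand_injective : Function.Injective fun t : Fin m => addedCand b a t := by
  have hne : ∀ {t t' : Fin m}, t < t' → addedCand b a t ≠ addedCand b a t' :=
    fun {t t'} hlt h => by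
      have hmem : addedCand b a t ∈ arc (arcStart b a t') t' :=
        monotone_arc_arcStart b a (Nat.succ_le_of_lt hlt) (by simp [arc_arcStart_succ])
      exact addedCand_notMem_arc b a t'.isLt (h ▸ hmem)
  intro t t' h
  by_contra hne'
  rcases lt_or_gt_of_ne hne' with hlt | hlt
  exacts [hne hlt h, hne hlt h.symm]

noncomputable def decode : Equiv.Perm (Fin m) :=
  (Equiv.ofBijective _ (Finite.injective_iff_bijective.1 (addedCand_injective b a))).symm

lemma decode_symm_natCast {t : ℕ} (ht : t < m) : (decode b a).symm t = addedCand b a t := by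
  simp [decode, Fin.val_natCast, Nat.mod_eq_of_lt ht]

lemma topSet_decode {t : ℕ} (ht : t ≤ m) : topSet (decode b a) t = arc (arcStart b a t) t := by
  induction t with
  | zero => simp [topSet_zero, arc]
  | succ t ih =>
    rw [topSet_succ _ ht, ih (by omega), decode_symm_natCast b a ht, arc_arcStart_succ]

lemma isSPOC_decode : IsSPOC (decode b a) := fun t => by
  change IsArc (topSet _ t)
  rw [← topSet_min, topSet_decode b a (min_le_right t m), isArc_iff]
  exact Or.inr ⟨_, _, rfl⟩

lemma decode_symm_zero (hb : b 0 = false) : (decode b a).symm 0 = a := by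
  simpa [addedCand, hb, arcStart] using decode_symm_natCast b a (t := 0) (Nat.pos_of_neZero m)

end Decode

/-- A new candidate extends the arc to the left iff its right neighbour is already in it. -/
def extendsLeft (v : Equiv.Perm (Fin m)) (t : ℕ) : Bool :=
  decide (v.symm t + 1 ∈ topSet v t)

lemma extendsLeft_decode (b : ℕ → Bool) (a : Fin m) {t : ℕ} (ht : 0 < t) (htm : t + 1 < m) :
    extendsLeft (decode b a) t = b t := by
  rw [extendsLeft, decode_symm_natCast b a (by omega), topSet_decode b a (by omega), addedCand]
  cases b t
  · rw [if_neg Bool.false_ne_true, decide_eq_false_iff_not, add_assoc, ← Nat.cast_add_one]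
    exact add_natCast_notMem_arc _ (Nat.le_succ t) htm
  · rw [if_pos rfl, decide_eq_true_iff, sub_add_cancel]
    exact self_mem_arc _ ht

lemma topSet_eq_arc_arcStart {v : Equiv.Perm (Fin m)} (hv : IsSPOC v) {b : ℕ → Bool}
    (hb0 : b 0 = false) (hb : ∀ t, 0 < t → t + 1 < m → b t = extendsLeft v t) {t : ℕ}
    (ht : t ≤ m) : topSet v t = arc (arcStart b (v.symm 0) t) t := by
  induction t with
  | zero => simp [topSet_zero, arc]
  | succ t ih =>
    have hstep := topSet_succ v ht
    obtain rfl | ht0 := Nat.eq_zero_or_pos t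
    · rw [hstep, topSet_zero, arcStart, hb0, if_neg Bool.false_ne_true, arc_succ, arc]
      simp [arcStart]
    obtain htm | htm := eq_or_lt_of_le ht
    · rw [topSet_eq_univ v htm.ge, arc_eq_univ _ htm.ge]
    obtain ⟨l', hl'⟩ := exists_topSet_eq_arc hv ht
    rw [ih (by omega)] at hstep
    have := eq_ite_of_insert_eq_arc ht0 htm (ih (by omega) ▸ symm_notMem_topSet v (by omega))
      (hstep.symm.trans hl')
    rw [hl', this, arcStart, hb t ht0 htm, extendsLeft, ih (by omega)]
    simp only [decide_eq_true_eq]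

lemma decode_eq_self {v : Equiv.Perm (Fin m)} (hv : IsSPOC v) {b : ℕ → Bool}
    (hb0 : b 0 = false) (hb : ∀ t, 0 < t → t + 1 < m → b t = extendsLeft v t) :
    decode b (v.symm 0) = v :=
  eq_of_topSet_eq fun t ht => by rw [topSet_decode _ _ ht, topSet_eq_arc_arcStart hv hb0 hb ht]

-- At steps `0` and `m - 1` both extensions add the same candidate; only the others are free.
def stepBits (c : Fin (m - 2) → Bool) (t : ℕ) : Bool :=
  if h : 0 < t ∧ t + 1 < m then c ⟨t - 1, by omega⟩ else false

noncomputable def isSPOCEquiv :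
    {v : Equiv.Perm (Fin m) // IsSPOC v} ≃ Fin m × (Fin (m - 2) → Bool) where
  toFun v := (v.1.symm 0, fun i => extendsLeft v.1 (i + 1))
  invFun p := ⟨decode (stepBits p.2) p.1, isSPOC_decode _ _⟩
  left_inv v := Subtype.ext <| decode_eq_self v.2 (by simp [stepBits]) fun t ht htm => by
    simp [stepBits, ht, htm, Nat.sub_add_cancel ht]
  right_inv p := by
    refine Prod.ext (decode_symm_zero _ _ (by simp [stepBits])) (funext fun i => ?_)
    change extendsLeft (decode (stepBits p.2) p.1) (i + 1) = p.2 i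
    rw [extendsLeft_decode _ _ (Nat.succ_pos i) (by omega)]
    simp [stepBits, show (i : ℕ) + 1 + 1 < m by omega]

end CircleSinglePeaked

theorem stmt18 (m : ℕ) (hm : 3 ≤ m) :
    (∀ v : Equiv.Perm (Fin m), IsSPOC v → ∃ s : Fin m, IsSPPath s v) ∧
    Nat.card {v : Equiv.Perm (Fin m) // IsSPOC v} = m * 2 ^ (m - 2) := by
  have : NeZero m := ⟨by omega⟩
  refine ⟨fun v hv => CircleSinglePeaked.exists_isSPPath hv, ?_⟩
  rw [Nat.card_congr CircleSinglePeaked.isSPOCEquiv]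
  simp [Nat.card_eq_fintype_card]
end
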